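/- Let F be a finite field and let m, n be integers with 2 ≤ m and m dividing n. Let χ be a multiplicative character of F with values in ℂ (extended by χ(0) = 0) such that χ^m is the trivial character. Then ∑_{x ∈ F} ∑_{y ∈ F} χ(f_n(x,y)) = ∑_{x ∈ F} ∑_{y ∈ F} χ(f_m(x,y)), where f_k(x,y) = (xy)^{k−1}(1−x)(1−y)(1−xy)^{k−1} for any integer k ≥ 2. -/

import Mathlib

/-! Writing `f_k(x,y) = t^(k-1) (1-x)(1-y)` with `t = xy(1-xy)`, the two summands differ only in
the exponent of `χ t`. If `t = 0` both exponents are positive, so both summands vanish; otherwise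
`χ t` is an `m`-th root of unity and `n - 1 ≡ m - 1 [MOD m]`. -/

/-- The polynomial `f_k(x,y) = (xy)^{k-1}(1-x)(1-y)(1-xy)^{k-1}`. -/
def fpoly (k : ℕ) {F : Type*} [CommRing F] (x y : F) : F :=
  (x * y) ^ (k - 1) * (1 - x) * (1 - y) * (1 - x * y) ^ (k - 1)

lemma fpoly_eq_pow_mul (k : ℕ) {F : Type*} [CommRing F] (x y : F) :
    fpoly k x y = (x * y * (1 - x * y)) ^ (k - 1) * ((1 - x) * (1 - y)) := by
  simp only [fpoly, mul_pow]
  ring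

lemma MulChar.apply_pow_eq_of_modEq {R R' : Type*} [CommMonoid R] [CommMonoidWithZero R']
    (χ : MulChar R R') {m a b : ℕ} (hχ : χ ^ m = 1) (hab : a ≡ b [MOD m]) (ha : a ≠ 0)
    (hb : b ≠ 0) (x : R) : χ x ^ a = χ x ^ b := by
  by_cases hx : IsUnit x
  · obtain ⟨u, rfl⟩ := hx
    refine pow_eq_pow_of_modEq hab ?_
    rw [← χ.pow_apply_coe, hχ, MulChar.one_apply_coe]
  · rw [χ.map_nonunit hx, zero_pow ha, zero_pow hb]

lemma Nat.sub_one_modEq_sub_one_of_dvd {m n : ℕ} (hn : n ≠ 0) (hmn : m ∣ n) :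
    n - 1 ≡ m - 1 [MOD m] := by
  have hle : m ≤ n := Nat.le_of_dvd (Nat.pos_of_ne_zero hn) hmn
  have hm : 0 < m := Nat.pos_of_dvd_of_pos hmn (Nat.pos_of_ne_zero hn)
  refine ((Nat.modEq_iff_dvd' (by omega)).2 ?_).symm
  rw [show n - 1 - (m - 1) = n - m by omega]
  exact Nat.dvd_sub hmn dvd_rfl

/-- Section 5.5 of the paper: if `χ` is a multiplicative character of a finite
field `F` with `χ^m` trivial and `m ∣ n` (both at least `2`), then the
character sum of `χ ∘ f_n` equals that of `χ ∘ f_m`. -/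
theorem char_sum_divisor
    {F : Type*} [Field F] [Fintype F]
    (m n : ℕ) (hm : 2 ≤ m) (hn : 2 ≤ n) (hmn : m ∣ n)
    (χ : MulChar F ℂ) (htriv : χ ^ m = 1) :
    ∑ x : F, ∑ y : F, χ (fpoly n x y) = ∑ x : F, ∑ y : F, χ (fpoly m x y) := by
  refine Finset.sum_congr rfl fun x _ => Finset.sum_congr rfl fun y _ => ?_
  rw [fpoly_eq_pow_mul, fpoly_eq_pow_mul, map_mul, map_pow, map_mul χ (_ ^ _), map_pow,
    χ.apply_pow_eq_of_modEq htriv (Nat.sub_one_modEq_sub_one_of_dvd (by omega) hmn)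
    (by omega) (by omega)]
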